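/- For any integer d ≥ 3 and any real p ≥ 0, there exists a constant C < 2 (depending only on d and p) such that for all (x_1,…,x_d) ∈ Δ_d, Σ_{i=1}^{d−2} [ 1/((x_{i+2} − x_{i+1})(x_{i+1} − x_i)^{p+1}) + 1/((x_{i+2} − x_{i+1})^{p+1} (x_{i+1} − x_i)) ] ≤ C · Σ_{i=1}^{d−1} 1/(x_{i+1} − x_i)^{p+2}. -/

import Mathlib

/-!
Writing `v_j = 1/(x_{j+1} - x_j)`, the `i`-th summand is `v_{i+1} v_i^{p+1} + v_{i+1}^{p+1} v_i`.
Young's inequality bounds it by `c v_i^{p+2} + φ(c) v_{i+1}^{p+2}` for any `c > 0`, where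
`φ = crossCoeff p`, `φ(1) = 1` and `c + φ(c) = 2 + O((c - 1)^2)`. With `c = 1` everywhere this
only gives the constant `2`; for `m + 2` gaps, letting the weights decrease linearly,
`c_i = 1 + (m - i) δ`, the first-order terms cancel, each `v_j^{p+2}` collects a total
coefficient `2 - δ + O(m^2 δ^2)`, and `δ ≍ 1/m^2` makes this at most `2 - δ/2`.
-/

open Finset Real

theorem rpow_mul_le_young {s X w : ℝ} (hs : 0 < s) (hX : 0 ≤ X) (hw : 0 ≤ w) :
    (s + 1) * (X ^ s * w) ≤ s * X ^ (s + 1) + w ^ (s + 1) := by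
  have hs1 : 0 < s + 1 := by linarith
  have h := geom_mean_le_arith_mean2_weighted (p₁ := X ^ (s + 1)) (p₂ := w ^ (s + 1))
    (div_nonneg hs.le hs1.le) (one_div_nonneg.2 hs1.le) (by positivity) (by positivity)
    (by field_simp)
  rw [← rpow_mul hX, ← rpow_mul hw, mul_div_cancel₀ s hs1.ne', mul_one_div_cancel hs1.ne',
    rpow_one] at h
  calc (s + 1) * (X ^ s * w)
        ≤ (s + 1) * (s / (s + 1) * X ^ (s + 1) + 1 / (s + 1) * w ^ (s + 1)) :=
          mul_le_mul_of_nonneg_left h hs1.le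
    _ = s * X ^ (s + 1) + w ^ (s + 1) := by field_simp

theorem rpow_mul_le_young_scaled {s γ X w : ℝ} (hs : 0 < s) (hγ : 0 < γ) (hX : 0 ≤ X)
    (hw : 0 ≤ w) : (s + 1) * (X ^ s * w) ≤ s * γ * X ^ (s + 1) + γ ^ (-s) * w ^ (s + 1) := by
  have h := rpow_mul_le_young hs (mul_nonneg hγ.le hX) hw
  rw [mul_rpow hγ.le hX, mul_rpow hγ.le hX, rpow_add_one hγ.ne'] at h
  have hγs : 0 < γ ^ s := rpow_pos_of_pos hγ s
  refine le_of_mul_le_mul_left ?_ hγs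
  rw [rpow_neg hγ.le]
  calc γ ^ s * ((s + 1) * (X ^ s * w)) = (s + 1) * (γ ^ s * X ^ s * w) := by ring
    _ ≤ s * (γ ^ s * γ * X ^ (s + 1)) + w ^ (s + 1) := h
    _ = γ ^ s * (s * γ * X ^ (s + 1) + (γ ^ s)⁻¹ * w ^ (s + 1)) := by field_simp

/-- The price Young's inequality charges on `w^(p+2)` when `v^(p+2)` is charged `c`
(see `mul_rpow_add_rpow_mul_le`). -/
noncomputable def crossCoeff (p c : ℝ) : ℝ :=
  (c ^ (-(p + 1)) + (p + 1) * c ^ (-(p + 1)⁻¹)) / (p + 2)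

theorem mul_rpow_add_rpow_mul_le {p c v w : ℝ} (hp : -1 < p) (hc : 0 < c) (hv : 0 ≤ v)
    (hw : 0 ≤ w) :
    w * v ^ (p + 1) + w ^ (p + 1) * v ≤ c * v ^ (p + 2) + crossCoeff p c * w ^ (p + 2) := by
  have hs : 0 < p + 1 := by linarith
  have h₁ := rpow_mul_le_young_scaled hs hc hv hw
  have h₂ := rpow_mul_le_young_scaled hs (rpow_pos_of_pos hc (-(p + 1)⁻¹)) hw hv
  have hcc : (c ^ (-(p + 1)⁻¹)) ^ (-(p + 1)) = c := by
    rw [← rpow_mul hc.le, neg_mul_neg, inv_mul_cancel₀ hs.ne', rpow_one]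
  rw [hcc, show p + 1 + 1 = p + 2 by ring] at h₂
  rw [show p + 1 + 1 = p + 2 by ring] at h₁
  have hp2 : 0 < p + 2 := by linarith
  refine le_of_mul_le_mul_left ?_ hp2
  have e : (p + 2) * (c * v ^ (p + 2) + crossCoeff p c * w ^ (p + 2)) = (p + 2) * c * v ^ (p + 2)
      + (c ^ (-(p + 1)) + (p + 1) * c ^ (-(p + 1)⁻¹)) * w ^ (p + 2) := by
    unfold crossCoeff
    field_simp
  rw [e]
  linarith

theorem one_add_rpow_neg_le {r y : ℝ} (hr : 0 ≤ r) (hy : 0 ≤ y) :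
    (1 + y) ^ (-r) ≤ 1 - r * y + r * (r + 1) * y ^ 2 := by
  have hy1 : 0 < 1 + y := by linarith
  rcases le_total r 1 with hr1 | hr1
  · have hs : -1 ≤ (1 + y)⁻¹ - 1 := by linarith [inv_pos.2 hy1]
    have h := rpow_one_add_le_one_add_mul_self hs hr hr1
    rw [add_sub_cancel, inv_rpow hy1.le, ← rpow_neg hy1.le] at h
    have hfrac : y - y ^ 2 ≤ 1 - (1 + y)⁻¹ := by
      rw [← sub_nonneg]
      have : 1 - (1 + y)⁻¹ - (y - y ^ 2) = y ^ 3 / (1 + y) := by field_simp; ring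
      rw [this]; positivity
    nlinarith [mul_le_mul_of_nonneg_left hfrac hr, mul_nonneg (mul_nonneg hr hr) (sq_nonneg y)]
  · have h := one_add_mul_self_le_rpow_one_add (by linarith : -1 ≤ y) hr1
    have hpos : 0 < 1 + r * y := by positivity
    rw [rpow_neg hy1.le]
    calc ((1 + y) ^ r)⁻¹ ≤ (1 + r * y)⁻¹ := inv_anti₀ hpos h
      _ ≤ 1 - r * y + r ^ 2 * y ^ 2 := by
        rw [inv_le_iff_one_le_mul₀ hpos]
        nlinarith [pow_nonneg (mul_nonneg hr hy) 3]
      _ ≤ 1 - r * y + r * (r + 1) * y ^ 2 := by nlinarith [mul_nonneg hr (sq_nonneg y)]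

theorem crossCoeff_le {p c : ℝ} (hp : -1 < p) (hc : 1 ≤ c) :
    crossCoeff p c ≤ 2 - c + (p + 1 + (p + 1)⁻¹) * (c - 1) ^ 2 := by
  have hs : 0 < p + 1 := by linarith
  obtain ⟨y, hy, rfl⟩ : ∃ y, 0 ≤ y ∧ c = 1 + y := ⟨c - 1, by linarith, by ring⟩
  have h₁ := one_add_rpow_neg_le hs.le hy
  have h₂ := mul_le_mul_of_nonneg_left (one_add_rpow_neg_le (inv_nonneg.2 hs.le) hy) hs.le
  unfold crossCoeff
  rw [div_le_iff₀ (by linarith)]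
  have e₂ : (p + 1) * (1 - (p + 1)⁻¹ * y + (p + 1)⁻¹ * ((p + 1)⁻¹ + 1) * y ^ 2)
      = p + 1 - y + ((p + 1)⁻¹ + 1) * y ^ 2 := by field_simp
  have e : (2 - (1 + y) + (p + 1 + (p + 1)⁻¹) * (1 + y - 1) ^ 2) * (p + 2)
      = (p + 2) - (p + 2) * y + ((p + 1) * (p + 2) + (p + 1)⁻¹ + 1) * y ^ 2 := by
    field_simp; ring
  rw [e₂] at h₂
  rw [e]
  nlinarith

theorem crossCoeff_one (p : ℝ) (hp : -1 < p) : crossCoeff p 1 = 1 := by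
  unfold crossCoeff
  rw [one_rpow, one_rpow, mul_one, show 1 + (p + 1) = p + 2 by ring]
  exact div_self (by linarith)

theorem sum_range_mul_add_mul_succ_le {a c e : ℕ → ℝ} {C : ℝ} {m : ℕ}
    (ha : ∀ j ≤ m + 1, 0 ≤ a j) (h₀ : c 0 ≤ C) (hmid : ∀ i < m, e i + c (i + 1) ≤ C)
    (hlast : e m ≤ C) :
    ∑ i ∈ range (m + 1), (c i * a i + e i * a (i + 1)) ≤ C * ∑ j ∈ range (m + 2), a j := by
  rw [sum_add_distrib, sum_range_succ' (fun i => c i * a i),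
    sum_range_succ (fun i => e i * a (i + 1)), mul_sum, sum_range_succ, sum_range_succ']
  have hinner : ∑ i ∈ range m, c (i + 1) * a (i + 1) + ∑ i ∈ range m, e i * a (i + 1)
      ≤ ∑ i ∈ range m, C * a (i + 1) := by
    rw [← sum_add_distrib]
    refine sum_le_sum fun i hi => ?_
    have hi : i < m := mem_range.1 hi
    rw [← add_mul]
    exact mul_le_mul_of_nonneg_right (by linarith [hmid i hi]) (ha (i + 1) (by omega))
  nlinarith [mul_le_mul_of_nonneg_right h₀ (ha 0 (by omega)),
    mul_le_mul_of_nonneg_right hlast (ha (m + 1) le_rfl)]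

theorem exists_chain_weights {p : ℝ} (hp : -1 < p) (m : ℕ) :
    ∃ C < 2, ∃ c : ℕ → ℝ, (∀ i ≤ m, 0 < c i) ∧ c 0 ≤ C ∧
      (∀ i < m, crossCoeff p (c i) + c (i + 1) ≤ C) ∧ crossCoeff p (c m) ≤ C := by
  have hs : 0 < p + 1 := by linarith
  set K := p + 1 + (p + 1)⁻¹
  have hK : 0 ≤ K := by positivity
  set N : ℝ := m + 1
  have hN : 1 ≤ N := by simp [N]
  set δ := 1 / (2 * (K + 1) * N ^ 2)
  have hδ : 0 < δ := by positivity
  have hδN : 2 * (K + 1) * N ^ 2 * δ = 1 := mul_one_div_cancel (by positivity)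
  have hNδ : N * δ ≤ 1 / 2 := by
    have h2 : 2 ≤ 2 * (K + 1) * N := by nlinarith
    nlinarith [mul_le_mul_of_nonneg_left h2 (mul_nonneg (by linarith : (0 : ℝ) ≤ N) hδ.le)]
  refine ⟨2 - δ / 2, by linarith, fun i => 1 + ((m : ℝ) - i) * δ,
    fun i hi => ?_, ?_, fun i hi => ?_, ?_⟩
  · have : (i : ℝ) ≤ m := by exact_mod_cast hi
    nlinarith
  · simp only [CharP.cast_eq_zero, sub_zero]
    nlinarith
  · have hi' : (i : ℝ) + 1 ≤ m := by exact_mod_cast hi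
    have hy : 0 ≤ ((m : ℝ) - i) * δ := by nlinarith
    have hyN : ((m : ℝ) - i) * δ ≤ N * δ := by nlinarith
    have hφ := crossCoeff_le hp (show 1 ≤ 1 + ((m : ℝ) - i) * δ by linarith)
    have hsq : K * (((m : ℝ) - i) * δ) ^ 2 ≤ δ / 2 :=
      calc K * (((m : ℝ) - i) * δ) ^ 2 ≤ (K + 1) * (N * δ) ^ 2 := by
            gcongr
            linarith
        _ = δ / 2 := by linear_combination δ / 2 * hδN
    push_cast
    nlinarith
  · simp only [sub_self, zero_mul, add_zero, crossCoeff_one p hp]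
    nlinarith

theorem one_div_mul_rpow_add_le {p c V W : ℝ} (hp : -1 < p) (hc : 0 < c) (hV : 0 < V)
    (hW : 0 < W) :
    1 / (W * V ^ (p + 1)) + 1 / (W ^ (p + 1) * V)
      ≤ c * (1 / V ^ (p + 2)) + crossCoeff p c * (1 / W ^ (p + 2)) := by
  have h := mul_rpow_add_rpow_mul_le hp hc (inv_nonneg.2 hV.le) (inv_nonneg.2 hW.le)
  simp only [inv_rpow hV.le, inv_rpow hW.le, ← mul_inv] at h
  simpa only [one_div] using h

theorem exists_const_lt_two_nearest_neighbor
    (d : ℕ) (hd : 3 ≤ d) (p : ℝ) (hp : 0 ≤ p) :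
    ∃ C : ℝ, C < 2 ∧
      ∀ x : ℕ → ℝ, (∀ i, i + 1 < d → x i < x (i + 1)) →
        ∑ i ∈ Finset.range (d - 2),
            (1 / ((x (i + 2) - x (i + 1)) * (x (i + 1) - x i) ^ (p + 1))
              + 1 / ((x (i + 2) - x (i + 1)) ^ (p + 1) * (x (i + 1) - x i)))
          ≤ C * ∑ i ∈ Finset.range (d - 1), 1 / (x (i + 1) - x i) ^ (p + 2) := by
  obtain ⟨m, rfl⟩ : ∃ m, d = m + 3 := ⟨d - 3, by omega⟩
  have hp' : -1 < p := by linarith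
  obtain ⟨C, hC, c, hc, h₀, hmid, hlast⟩ := exists_chain_weights hp' m
  refine ⟨C, hC, fun x hx => ?_⟩
  have hgap : ∀ i ≤ m + 1, 0 < x (i + 1) - x i := fun i hi => sub_pos.2 (hx i (by omega))
  rw [show m + 3 - 2 = m + 1 by omega, show m + 3 - 1 = m + 2 by omega]
  calc _ ≤ ∑ i ∈ range (m + 1), (c i * (1 / (x (i + 1) - x i) ^ (p + 2))
          + crossCoeff p (c i) * (1 / (x (i + 1 + 1) - x (i + 1)) ^ (p + 2))) :=
        sum_le_sum fun i hi => by
          have hi : i < m + 1 := mem_range.1 hi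
          exact one_div_mul_rpow_add_le hp' (hc i (by omega)) (hgap i (by omega))
            (hgap (i + 1) (by omega))
    _ ≤ _ := sum_range_mul_add_mul_succ_le (fun j hj => by have := hgap j hj; positivity)
        h₀ hmid hlast
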